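/- arXiv:1310.7656 — 2 statements merged into one kernel-verified Lean document; each statement's English description precedes it below -/
import Mathlib

section
/- Let Λ be a finitely aligned k-graph, let c be a T-valued 2-cocycle on Λ, and let t be a Cuntz–Krieger (Λ,c)-family in a C*-algebra. Let (μ,ν) be a generalised cycle in Λ with an entrance τ ∈ s(ν)Λ (so MCE(μ,ντ) = ∅), and suppose t_{s(τ)} ≠ 0. Then V := t_μ t_ν* satisfies VV* = q_μ and V*V = q_ν; moreover q_{ντ} ≠ 0, q_{ντ} ≤ q_ν, and q_μ ≤ q_ν − q_{ντ}. Consequently q_μ is an infinite projection: the element W := t_μ t_ν* q_μ satisfies W*W = q_μ, WW* ≤ q_μ and WW* ≠ q_μ. -/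
open scoped BigOperators

/-- A `k`-graph: a countable category with degree functor `d : Λ → ℕ^k`
satisfying the factorisation property.  Composition `comp μ ν` is only
meaningful when `s μ = r ν`. -/
structure KGraph (k : ℕ) where
  Path : Type
  countable : Countable Path
  r : Path → Path
  s : Path → Path
  d : Path → (Fin k → ℕ)
  comp : Path → Path → Path
  d_r : ∀ l, d (r l) = 0
  d_s : ∀ l, d (s l) = 0
  r_of_vertex : ∀ v, d v = 0 → r v = v
  s_of_vertex : ∀ v, d v = 0 → s v = v
  id_comp : ∀ l, comp (r l) l = l
  comp_id : ∀ l, comp l (s l) = l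
  r_comp : ∀ μ ν, s μ = r ν → r (comp μ ν) = r μ
  s_comp : ∀ μ ν, s μ = r ν → s (comp μ ν) = s ν
  d_comp : ∀ μ ν, s μ = r ν → d (comp μ ν) = d μ + d ν
  comp_assoc : ∀ l μ ν, s l = r μ → s μ = r ν →
    comp (comp l μ) ν = comp l (comp μ ν)
  factor : ∀ (l : Path) (m n : Fin k → ℕ), d l = m + n →
    ∃! p : Path × Path, d p.1 = m ∧ d p.2 = n ∧ s p.1 = r p.2 ∧ comp p.1 p.2 = l

namespace KGraph

variable {k : ℕ} (G : KGraph k)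

def IsVertex (v : G.Path) : Prop := G.d v = 0

/-- `MCE μ ν = μΛ ∩ νΛ ∩ Λ^{d μ ⊔ d ν}`. -/
def MCE (μ ν : G.Path) : Set G.Path :=
  {l | G.d l = G.d μ ⊔ G.d ν ∧
      (∃ α, G.s μ = G.r α ∧ G.comp μ α = l) ∧
      (∃ β, G.s ν = G.r β ∧ G.comp ν β = l)}

def FinitelyAligned : Prop := ∀ μ ν : G.Path, (G.MCE μ ν).Finite

/-- `Ext(μ; E) = ⋃_{ν ∈ E} {α : μα ∈ MCE(μ,ν)}`. -/
def Ext (μ : G.Path) (E : Set G.Path) : Set G.Path :=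
  {α | G.s μ = G.r α ∧ ∃ ν ∈ E, G.comp μ α ∈ G.MCE μ ν}

/-- `Ext` computed relative to a sub-`k`-graph with path set `W`. -/
def ExtIn (W : Set G.Path) (μ : G.Path) (E : Set G.Path) : Set G.Path :=
  {α | G.s μ = G.r α ∧ ∃ ν ∈ E, G.comp μ α ∈ G.MCE μ ν ∩ W}

/-- `E` is exhaustive at `v` relative to the sub-`k`-graph with path set `W`. -/
def ExhaustiveIn (W : Set G.Path) (v : G.Path) (E : Set G.Path) : Prop :=
  ∀ l ∈ W, G.r l = v → ∃ μ ∈ E, (G.MCE l μ ∩ W).Nonempty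

def Exhaustive (v : G.Path) (E : Set G.Path) : Prop := G.ExhaustiveIn Set.univ v E

/-- Membership in `FE` of the sub-`k`-graph with path set `W`. -/
def IsFEIn (W : Set G.Path) (E : Set G.Path) : Prop :=
  E.Finite ∧ E ⊆ W ∧ (∀ μ ∈ E, ¬ G.IsVertex μ) ∧
    ∃ v, G.IsVertex v ∧ (∀ μ ∈ E, G.r μ = v) ∧ G.ExhaustiveIn W v E

def IsFE (E : Set G.Path) : Prop := G.IsFEIn Set.univ E

/-- A satiated collection of finite exhaustive sets, relative to the sub-`k`-graph `W`. -/
def SatiatedIn (W : Set G.Path) (Ε : Set (Set G.Path)) : Prop :=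
  (∀ E ∈ Ε, G.IsFEIn W E) ∧
  ∀ F ∈ Ε, ∀ v, G.IsVertex v → (∀ μ ∈ F, G.r μ = v) →
    ((∀ l ∈ W, G.r l = v → l ≠ v → insert l F ∈ Ε) ∧
     (∀ l ∈ W, G.r l = v →
        (¬ ∃ μ ∈ F, ∃ μ', G.s μ = G.r μ' ∧ G.comp μ μ' = l) →
        G.ExtIn W l F ∈ Ε) ∧
     (∀ lam lam', lam ∈ F → G.s lam = G.r lam' → G.comp lam lam' ∈ F →
        lam' ≠ G.s lam → F \ {G.comp lam lam'} ∈ Ε) ∧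
     (∀ lam ∈ F, ∀ Gs ∈ Ε, (∀ μ ∈ Gs, G.r μ = G.s lam) →
        ((F \ {lam}) ∪ (G.comp lam) '' Gs) ∈ Ε))

def Satiated (Ε : Set (Set G.Path)) : Prop := G.SatiatedIn Set.univ Ε

end KGraph

/-- A normalised `𝕋`-valued categorical `2`-cocycle on a `k`-graph, with the
circle realised as the norm-one complex numbers. -/
structure KGraph.Cocycle {k : ℕ} (G : KGraph k) where
  c : G.Path → G.Path → ℂ
  norm_one : ∀ μ ν, G.s μ = G.r ν → ‖c μ ν‖ = 1
  cocycle : ∀ l μ ν, G.s l = G.r μ → G.s μ = G.r ν →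
    c l μ * c (G.comp l μ) ν = c μ ν * c l (G.comp μ ν)
  left_id : ∀ l, c (G.r l) l = 1
  right_id : ∀ l, c l (G.s l) = 1

namespace KGraph

variable {k : ℕ} (G : KGraph k)

section CStar

variable {A : Type*} [NonUnitalNormedRing A] [StarRing A] [CStarRing A]
  [NormedSpace ℂ A] [IsScalarTower ℂ A A] [SMulCommClass ℂ A A]
  [StarModule ℂ A] [CompleteSpace A]

/-- Toeplitz–Cuntz–Krieger `(Λ, c)`-family. -/
def IsTCK (σ : G.Cocycle) (t : G.Path → A) : Prop :=
  (∀ v, G.IsVertex v → star (t v) = t v ∧ t v * t v = t v) ∧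
  (∀ v w, G.IsVertex v → G.IsVertex w → v ≠ w → t v * t w = 0) ∧
  (∀ μ ν, G.s μ = G.r ν → t μ * t ν = σ.c μ ν • t (G.comp μ ν)) ∧
  (∀ l, star (t l) * t l = t (G.s l)) ∧
  (∀ μ ν (F : Finset G.Path), (F : Set G.Path) = G.MCE μ ν →
    (t μ * star (t μ)) * (t ν * star (t ν)) = ∑ l ∈ F, t l * star (t l))

open scoped Classical in
/-- `Δ(t)^F = ∏_{l ∈ F} (q_v - q_l)`; the factors commute for a TCK family, so the
`noncommProd` below is the product from the paper.  The product is computed in the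
unitization (with a harmless prefactor `q_v`, which acts as the identity on each
factor for a TCK family with `F ⊆ vΛ`), so that the empty product is `q_v`. -/
noncomputable def Delta (t : G.Path → A) (v : G.Path) (F : Finset G.Path) : A :=
  if h : (F : Set G.Path).Pairwise (Function.onFun Commute fun l =>
      ((t v * star (t v) - t l * star (t l) : A) : Unitization ℂ A))
  then (((t v * star (t v) : A) : Unitization ℂ A) *
      F.noncommProd (fun l => ((t v * star (t v) - t l * star (t l) : A) : Unitization ℂ A)) h).snd
  else 0

/-- Relative Cuntz–Krieger `(Λ, c; Ε)`-family. -/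
def IsRelCK (σ : G.Cocycle) (Ε : Set (Set G.Path)) (t : G.Path → A) : Prop :=
  G.IsTCK σ t ∧ ∀ (F : Finset G.Path) (v : G.Path), (F : Set G.Path) ∈ Ε →
    G.IsVertex v → (∀ μ ∈ F, G.r μ = v) → G.Delta t v F = 0

/-- Cuntz–Krieger `(Λ, c)`-family (finitely aligned case). -/
def IsCK (σ : G.Cocycle) (t : G.Path → A) : Prop :=
  G.IsRelCK σ {E | G.IsFE E} t

/-- The `C*`-subalgebra of `A` generated by a family `t`, as a subset of `A`. -/
def cstarOf (t : G.Path → A) : Set A :=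
  closure (↑(NonUnitalStarAlgebra.adjoin ℂ (Set.range t)) : Set A)

end CStar

/-- Row-finite with no sources: every `vΛ^n` is finite and nonempty. -/
def RowFiniteNoSources : Prop :=
  ∀ v, G.IsVertex v → ∀ n : Fin k → ℕ,
    {l | G.r l = v ∧ G.d l = n}.Finite ∧ {l | G.r l = v ∧ G.d l = n}.Nonempty

section CStar2

variable {A : Type*} [NonUnitalNormedRing A] [StarRing A] [CStarRing A]
  [NormedSpace ℂ A] [IsScalarTower ℂ A A] [SMulCommClass ℂ A A]
  [StarModule ℂ A] [CompleteSpace A]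

/-- Cuntz–Krieger family, row-finite no sources formulation:
`∑_{λ ∈ vΛ^n} t_λ t_λ* = t_v`. -/
def IsCKrf (σ : G.Cocycle) (t : G.Path → A) : Prop :=
  G.IsTCK σ t ∧ ∀ v (n : Fin k → ℕ) (F : Finset G.Path), G.IsVertex v →
    (F : Set G.Path) = {l | G.r l = v ∧ G.d l = n} →
    ∑ l ∈ F, t l * star (t l) = t v

end CStar2

/-- A filter in a `k`-graph. -/
def IsFilter (S : Set G.Path) : Prop :=
  (∀ l, (∃ α, G.s l = G.r α ∧ G.comp l α ∈ S) → l ∈ S) ∧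
  (∀ μ ∈ S, ∀ ν ∈ S, (G.MCE μ ν ∩ S).Nonempty)

/-- An ultrafilter: a filter meeting every `Λ^n`. -/
def IsUltrafilter (S : Set G.Path) : Prop :=
  G.IsFilter S ∧ ∀ n : Fin k → ℕ, ∃ l ∈ S, G.d l = n

/-- `ℓ_μ(S) = {ν : νΛ ∩ μS ≠ ∅}`. -/
def lmap (μ : G.Path) (S : Set G.Path) : Set G.Path :=
  {ν | ∃ τ ∈ S, G.s μ = G.r τ ∧ ∃ α, G.s ν = G.r α ∧ G.comp ν α = G.comp μ τ}

/-- `μ ∼ ν`: `ℓ_μ(S) = ℓ_ν(S)` for every ultrafilter `S` with `r(S) = s(μ)`. -/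
def PEquiv (μ ν : G.Path) : Prop :=
  ∀ S, G.IsUltrafilter S → G.s μ ∈ S → G.lmap μ S = G.lmap ν S

/-- `d` with values in `ℤ^k`. -/
def dZ (l : G.Path) : Fin k → ℤ := fun i => (G.d l i : ℤ)

/-- `Per(Λ) ≤ ℤ^k`, generated by `{d(μ) - d(ν) : μ ∼ ν}`. -/
def PerGroup : AddSubgroup (Fin k → ℤ) :=
  AddSubgroup.closure
    {m | ∃ μ ν, G.s μ = G.s ν ∧ G.PEquiv μ ν ∧ m = G.dZ μ - G.dZ ν}

/-- The hereditary set `H_Per`. -/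
def HPer : Set G.Path :=
  {v | G.IsVertex v ∧ ∀ m n : Fin k → ℕ,
    ((fun i => (m i : ℤ)) - fun i => (n i : ℤ)) ∈ G.PerGroup →
    ∀ l, G.r l = v → G.d l = m →
      ∃ μ, G.r μ = v ∧ G.d μ = n ∧ G.s μ = G.s l ∧ G.PEquiv l μ}

end KGraph

/-!
For a generalised cycle `(μ, ν)` with `μ ∉ νΛ`, the paths `α` with `μα ∈ MCE(μ, ν)` all have
degree `d μ ∨ d ν - d μ` and form a finite exhaustive set at `s(μ)`, so the Cuntz–Krieger
relation reads `t_{s(μ)} = ∑ q_α`; conjugating by `t_μ` turns this into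
`q_ν q_μ = ∑_{λ ∈ MCE(ν, μ)} q_λ = q_μ`. The entrance gives `q_{ντ} q_μ = 0`, whence
`q_μ ≤ q_ν - q_{ντ}`. Conjugating this inequality by the partial isometry `V`, which carries
`q_ν` onto `q_μ`, puts `W W* = V q_μ V*` below `q_μ - V q_{ντ} V*`, and `V q_{ντ} V* ≠ 0`
because `V* (V q_{ντ} V*) V = q_{ντ}`.
-/

theorem IsStarProjection.infinite_of_le_sub_of_partialIsometry {R : Type*} [NonUnitalRing R]
    [StarRing R] [PartialOrder R] [StarOrderedRing R] {V p q e : R} (hp : IsStarProjection p)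
    (he : IsStarProjection e) (hVV : V * star V = p) (hVV' : star V * V = q) (hqp : q * p = p)
    (hqe : q * e = e) (hpe : p ≤ q - e) (he0 : e ≠ 0) :
    star (V * p) * (V * p) = p ∧ V * p * star (V * p) ≤ p ∧ V * p * star (V * p) ≠ p := by
  have hq : IsSelfAdjoint q := hVV' ▸ .star_mul_self V
  have hpq : p * q = p := by
    simpa only [star_mul, hp.isSelfAdjoint.star_eq, hq.star_eq] using congrArg star hqp
  have heq : e * q = e := by
    simpa only [star_mul, he.isSelfAdjoint.star_eq, hq.star_eq] using congrArg star hqe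
  have hVqV : V * q * star V = p := by
    rw [← hVV', ← mul_assoc V, hVV, mul_assoc, hVV, hp.isIdempotentElem.eq]
  set P := V * e * star V
  have hP : P = V * e * star (V * e) := by
    rw [star_mul, he.isSelfAdjoint.star_eq, ← mul_assoc, mul_assoc V e e, he.isIdempotentElem.eq]
  have hP_nonneg : 0 ≤ P := hP ▸ mul_star_self_nonneg _
  have hP_ne : P ≠ 0 := by
    intro h
    apply he0
    calc e = q * e * q := by rw [hqe, heq]
      _ = star V * P * V := by rw [← hVV']; simp only [P, mul_assoc]
      _ = 0 := by rw [h, mul_zero, zero_mul]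
  have hle : V * p * star (V * p) ≤ p - P := calc
    V * p * star (V * p) = V * p * star V := by
      rw [star_mul, hp.isSelfAdjoint.star_eq, ← mul_assoc, mul_assoc V p p,
        hp.isIdempotentElem.eq]
    _ ≤ V * (q - e) * star V := star_right_conjugate_le_conjugate hpe V
    _ = p - P := by rw [mul_sub, sub_mul, hVqV]
  refine ⟨?_, hle.trans (sub_le_self p hP_nonneg), fun h => hP_ne ?_⟩
  · rw [star_mul, hp.isSelfAdjoint.star_eq, mul_assoc, ← mul_assoc (star V), hVV', ← mul_assoc,
      hpq, hp.isIdempotentElem.eq]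
  · rw [h] at hle
    exact le_antisymm ((le_sub_self_iff p).mp hle) hP_nonneg

theorem mul_noncommProd_eq_sub_sum {R ι : Type*} [Ring R] {e : R} {f q : ι → R}
    (he : IsIdempotentElem e) (s : Finset ι) (hf : ∀ i ∈ s, f i = e - q i)
    (hle : ∀ i ∈ s, e * q i = q i) (hre : ∀ i ∈ s, q i * e = q i)
    (horth : (s : Set ι).Pairwise fun i j => q i * q j = 0)
    (hcomm : (s : Set ι).Pairwise (Function.onFun Commute f)) :
    e * s.noncommProd f hcomm = e - ∑ i ∈ s, q i := by
  induction s using Finset.cons_induction with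
  | empty => simp
  | cons a s ha ih =>
    have ih := ih (fun i hi => hf i (Finset.mem_cons_of_mem hi))
      (fun i hi => hle i (Finset.mem_cons_of_mem hi))
      (fun i hi => hre i (Finset.mem_cons_of_mem hi))
      (horth.mono fun _ => Finset.mem_cons_of_mem) (hcomm.mono fun _ => Finset.mem_cons_of_mem)
    have hqa_orth : ∑ i ∈ s, q a * q i = 0 := Finset.sum_eq_zero fun i hi =>
      horth (Finset.mem_cons_self a s) (Finset.mem_cons_of_mem hi)
        (ne_of_mem_of_not_mem hi ha).symm
    rw [Finset.noncommProd_cons, Finset.sum_cons, hf a (Finset.mem_cons_self a s)]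
    calc e * ((e - q a) * s.noncommProd f _)
        = e * s.noncommProd f _ - q a * (e * s.noncommProd f _) := by
          rw [← mul_assoc, mul_sub, he.eq, hle a (Finset.mem_cons_self a s), sub_mul,
            ← mul_assoc, hre a (Finset.mem_cons_self a s)]
      _ = e - (q a + ∑ i ∈ s, q i) := by
          rw [ih, mul_sub, hre a (Finset.mem_cons_self a s), Finset.mul_sum, hqa_orth]
          abel

namespace KGraph

section

variable {k : ℕ} (G : KGraph k)

lemma comp_eq_self_of_isVertex {a p : G.Path} (h : G.s a = G.r p) (hp : G.IsVertex p) :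
    G.comp a p = a := by
  rw [← G.r_of_vertex p hp, ← h, G.comp_id]

lemma exists_comp_eq_of_le (x : G.Path) {m : Fin k → ℕ} (h : m ≤ G.d x) :
    ∃ a b, G.s a = G.r b ∧ G.d a = m ∧ G.comp a b = x := by
  obtain ⟨⟨a, b⟩, ⟨ha, -, hab, rfl⟩, -⟩ :=
    G.factor x m (G.d x - m) (add_tsub_cancel_of_le h).symm
  exact ⟨a, b, hab, ha, rfl⟩

lemma eq_of_comp_eq {a b a' b' : G.Path} (hab : G.s a = G.r b) (hab' : G.s a' = G.r b')
    (hd : G.d a = G.d a') (h : G.comp a b = G.comp a' b') : a = a' ∧ b = b' := by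
  have hdb : G.d b = G.d b' :=
    add_left_cancel (by rw [← G.d_comp a b hab, h, G.d_comp a' b' hab', hd])
  obtain ⟨p, -, hu⟩ := G.factor (G.comp a b) (G.d a) (G.d b) (G.d_comp a b hab)
  exact Prod.mk.inj <|
    (hu (a, b) ⟨rfl, rfl, hab, rfl⟩).trans (hu (a', b') ⟨hd.symm, hdb.symm, hab', h.symm⟩).symm

lemma mce_comm (a b : G.Path) : G.MCE a b = G.MCE b a := by
  ext x
  simp only [MCE, Set.mem_ofPred_eq, sup_comm (G.d a)]
  tauto

lemma mce_eq_empty_of_d_eq {a b : G.Path} (hd : G.d a = G.d b) (hne : a ≠ b) :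
    G.MCE a b = ∅ :=
  Set.eq_empty_of_forall_notMem fun _ ⟨_, ⟨_, hp, hx⟩, ⟨_, hq, hx'⟩⟩ =>
    hne (G.eq_of_comp_eq hp hq hd (hx.trans hx'.symm)).1

lemma exists_mem_mce_of_comp_eq {a b α β : G.Path} (hα : G.s a = G.r α) (hβ : G.s b = G.r β)
    (h : G.comp a α = G.comp b β) :
    ∃ α₁ γ, G.s a = G.r α₁ ∧ G.s α₁ = G.r γ ∧ G.comp α₁ γ = α ∧ G.comp a α₁ ∈ G.MCE a b := by
  have hd : G.d a + G.d α = G.d b + G.d β := by rw [← G.d_comp a α hα, h, G.d_comp b β hβ]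
  have hdα : G.d a ⊔ G.d b - G.d a ≤ G.d α := fun i => by
    have := congrFun hd i
    simp only [Pi.add_apply, Pi.sup_apply, Pi.sub_apply] at this ⊢
    omega
  have hdβ : G.d a ⊔ G.d b - G.d b ≤ G.d β := fun i => by
    have := congrFun hd i
    simp only [Pi.add_apply, Pi.sup_apply, Pi.sub_apply] at this ⊢
    omega
  obtain ⟨α₁, γ, hα₁γ, hdα₁, rfl⟩ := G.exists_comp_eq_of_le α hdα
  obtain ⟨β₁, δ, hβ₁δ, hdβ₁, rfl⟩ := G.exists_comp_eq_of_le β hdβ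
  have haα₁ : G.s a = G.r α₁ := by rwa [G.r_comp _ _ hα₁γ] at hα
  have hbβ₁ : G.s b = G.r β₁ := by rwa [G.r_comp _ _ hβ₁δ] at hβ
  have hda : G.d (G.comp a α₁) = G.d a ⊔ G.d b := by
    rw [G.d_comp _ _ haα₁, hdα₁, add_tsub_cancel_of_le le_sup_left]
  have hdb : G.d (G.comp b β₁) = G.d a ⊔ G.d b := by
    rw [G.d_comp _ _ hbβ₁, hdβ₁, add_tsub_cancel_of_le le_sup_right]
  have hprefix : G.comp a α₁ = G.comp b β₁ := by
    refine (G.eq_of_comp_eq (by rwa [G.s_comp _ _ haα₁]) (by rwa [G.s_comp _ _ hbβ₁])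
      (hda.trans hdb.symm) ?_).1
    rwa [G.comp_assoc _ _ _ haα₁ hα₁γ, G.comp_assoc _ _ _ hbβ₁ hβ₁δ]
  exact ⟨α₁, γ, haα₁, hα₁γ, rfl, hda, ⟨α₁, haα₁, rfl⟩, ⟨β₁, hbβ₁, hprefix.symm⟩⟩

lemma mce_nonempty_of_comp_eq {a b α β : G.Path} (hα : G.s a = G.r α) (hβ : G.s b = G.r β)
    (h : G.comp a α = G.comp b β) : (G.MCE a b).Nonempty :=
  let ⟨_, _, _, _, _, hmem⟩ := G.exists_mem_mce_of_comp_eq hα hβ h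
  ⟨_, hmem⟩

lemma mem_ext_singleton {μ ν α : G.Path} :
    α ∈ G.Ext μ {ν} ↔ G.s μ = G.r α ∧ G.comp μ α ∈ G.MCE μ ν := by
  simp [Ext]

lemma exists_mem_ext_mce_nonempty {μ ν l : G.Path} (hl : G.r l = G.s μ)
    (hne : (G.MCE (G.comp μ l) ν).Nonempty) :
    ∃ α ∈ G.Ext μ {ν}, (G.MCE l α).Nonempty := by
  obtain ⟨_, -, ⟨β, hβ, rfl⟩, ⟨γ, hγ, hξ⟩⟩ := hne
  have hslβ : G.s l = G.r β := by rwa [G.s_comp μ l hl.symm] at hβ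
  obtain ⟨α, η, hμα, hαη, hαη_eq, hmem⟩ :=
    G.exists_mem_mce_of_comp_eq (by rw [G.r_comp l β hslβ, hl]) hγ
      (by rw [← G.comp_assoc μ l β hl.symm hslβ, hξ])
  exact ⟨α, G.mem_ext_singleton.mpr ⟨hμα, hmem⟩,
    G.mce_nonempty_of_comp_eq hslβ hαη hαη_eq.symm⟩


lemma image_comp_ext_singleton (μ ν : G.Path) : G.comp μ '' G.Ext μ {ν} = G.MCE μ ν := by
  ext x
  constructor
  · rintro ⟨α, hα, rfl⟩
    exact (G.mem_ext_singleton.mp hα).2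
  · intro hx
    obtain ⟨α, hα, rfl⟩ := hx.2.1
    exact ⟨α, G.mem_ext_singleton.mpr ⟨hα, hx⟩, rfl⟩

lemma injOn_comp_ext_singleton (μ ν : G.Path) : Set.InjOn (G.comp μ) (G.Ext μ {ν}) :=
  fun _ hα _ hα' h =>
    (G.eq_of_comp_eq (G.mem_ext_singleton.mp hα).1 (G.mem_ext_singleton.mp hα').1 rfl h).2

lemma ext_singleton_finite (hFA : G.FinitelyAligned) (μ ν : G.Path) :
    (G.Ext μ {ν}).Finite :=
  (G.image_comp_ext_singleton μ ν ▸ hFA μ ν).of_finite_image (G.injOn_comp_ext_singleton μ ν)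

lemma d_eq_of_mem_ext_singleton {μ ν α α' : G.Path} (hα : α ∈ G.Ext μ {ν})
    (hα' : α' ∈ G.Ext μ {ν}) : G.d α = G.d α' := by
  obtain ⟨hμα, hdα, -⟩ := G.mem_ext_singleton.mp hα
  obtain ⟨hμα', hdα', -⟩ := G.mem_ext_singleton.mp hα'
  rw [G.d_comp μ α hμα] at hdα
  rw [G.d_comp μ α' hμα'] at hdα'
  exact add_left_cancel (hdα.trans hdα'.symm)

lemma isFE_ext_singleton (hFA : G.FinitelyAligned) {μ ν : G.Path}
    (hgc : ∀ τ' : G.Path, G.r τ' = G.s μ → (G.MCE (G.comp μ τ') ν).Nonempty)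
    (hμν : ¬ ∃ β, G.s ν = G.r β ∧ G.comp ν β = μ) : G.IsFE (G.Ext μ {ν}) := by
  refine ⟨G.ext_singleton_finite hFA μ ν, Set.subset_univ _, ?_, G.s μ, G.d_s μ,
    fun α hα => (G.mem_ext_singleton.mp hα).1.symm, ?_⟩
  · intro α hα hvα
    obtain ⟨hμα, -, -, hν⟩ := G.mem_ext_singleton.mp hα
    rw [G.comp_eq_self_of_isVertex hμα hvα] at hν
    exact hμν hν
  · intro l _ hl
    simpa only [Set.inter_univ] using G.exists_mem_ext_mce_nonempty hl (hgc l hl)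

end

section TCK

variable {k : ℕ} {G : KGraph k} {σ : G.Cocycle}
  {A : Type*} [NonUnitalNormedRing A] [StarRing A] [NormedSpace ℂ A] {t : G.Path → A}

lemma IsTCK.mul_source (ht : G.IsTCK σ t) (l : G.Path) : t l * t (G.s l) = t l := by
  rw [ht.2.2.1 l (G.s l) (G.r_of_vertex _ (G.d_s l)).symm, G.comp_id, σ.right_id, one_smul]

lemma IsTCK.range_mul (ht : G.IsTCK σ t) (l : G.Path) : t (G.r l) * t l = t l := by
  rw [ht.2.2.1 (G.r l) l (G.s_of_vertex _ (G.d_r l)), G.id_comp, σ.left_id, one_smul]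

lemma IsTCK.mul_star_self_of_isVertex (ht : G.IsTCK σ t) {v : G.Path} (hv : G.IsVertex v) :
    t v * star (t v) = t v := by
  rw [(ht.1 v hv).1, (ht.1 v hv).2]

lemma IsTCK.mul_star_mul_self (ht : G.IsTCK σ t) (l : G.Path) :
    t l * star (t l) * t l = t l := by
  rw [mul_assoc, ht.2.2.2.1 l, ht.mul_source]

lemma IsTCK.isStarProjection (ht : G.IsTCK σ t) (l : G.Path) :
    IsStarProjection (t l * star (t l)) :=
  ⟨by rw [IsIdempotentElem, ← mul_assoc, ht.mul_star_mul_self], .mul_star_self _⟩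

lemma IsTCK.mul_star_comp [IsScalarTower ℂ A A] [SMulCommClass ℂ A A] [StarModule ℂ A]
    (ht : G.IsTCK σ t) {a b : G.Path} (h : G.s a = G.r b) :
    t (G.comp a b) * star (t (G.comp a b)) = t a * (t b * star (t b)) * star (t a) := by
  have hc : σ.c a b * star (σ.c a b) = 1 := by
    rw [Complex.star_def, Complex.mul_conj, Complex.normSq_eq_norm_sq, σ.norm_one a b h,
      one_pow, Complex.ofReal_one]
  calc t (G.comp a b) * star (t (G.comp a b))
      = (σ.c a b • t (G.comp a b)) * star (σ.c a b • t (G.comp a b)) := by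
        rw [star_smul, smul_mul_smul_comm, hc, one_smul]
    _ = t a * (t b * star (t b)) * star (t a) := by
        rw [← ht.2.2.1 a b h, star_mul]
        simp only [mul_assoc]

lemma IsTCK.mul_star_mul_mul_star_comp [IsScalarTower ℂ A A] [SMulCommClass ℂ A A]
    [StarModule ℂ A] (ht : G.IsTCK σ t) {a b : G.Path} (h : G.s a = G.r b) :
    t a * star (t a) * (t (G.comp a b) * star (t (G.comp a b)))
      = t (G.comp a b) * star (t (G.comp a b)) := by
  rw [ht.mul_star_comp h, ← mul_assoc, ← mul_assoc, ht.mul_star_mul_self]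

lemma IsTCK.mul_star_mul_mul_star_eq_zero (ht : G.IsTCK σ t) {a b : G.Path}
    (h : G.MCE a b = ∅) : t a * star (t a) * (t b * star (t b)) = 0 := by
  simpa using ht.2.2.2.2 a b ∅ (by simp [h])

lemma IsTCK.delta_eq_sub_sum [IsScalarTower ℂ A A] [SMulCommClass ℂ A A] (ht : G.IsTCK σ t)
    {v : G.Path} (hv : G.IsVertex v) {F : Finset G.Path} (hrF : ∀ l ∈ F, G.r l = v)
    (horth : (F : Set G.Path).Pairwise fun l l' => t l * star (t l) * (t l' * star (t l')) = 0) :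
    G.Delta t v F = t v - ∑ l ∈ F, t l * star (t l) := by
  have hle : ∀ l ∈ F, t v * star (t v) * (t l * star (t l)) = t l * star (t l) := fun l hl => by
    rw [ht.mul_star_self_of_isVertex hv, ← hrF l hl, ← mul_assoc, ht.range_mul]
  have hre : ∀ l ∈ F, t l * star (t l) * (t v * star (t v)) = t l * star (t l) := fun l hl => by
    simpa only [star_mul, star_star, mul_assoc] using congrArg star (hle l hl)
  have hcomm : (F : Set G.Path).Pairwise (Function.onFun Commute fun l =>
      ((t v * star (t v) - t l * star (t l) : A) : Unitization ℂ A)) := by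
    intro l hl l' hl' hne
    simp only [Function.onFun, Commute, SemiconjBy, ← Unitization.inr_mul]
    congr 1
    simp only [mul_sub, sub_mul, (ht.isStarProjection v).isIdempotentElem.eq, hle l hl,
      hle l' hl', hre l hl, hre l' hl', horth hl hl' hne, horth hl' hl hne.symm]
    abel
  have hsum : ((∑ l ∈ F, t l * star (t l) : A) : Unitization ℂ A)
      = ∑ l ∈ F, ((t l * star (t l) : A) : Unitization ℂ A) :=
    map_sum (Unitization.inrHom ℂ ℂ A) _ F
  rw [Delta, dif_pos hcomm,
    mul_noncommProd_eq_sub_sum (q := fun l => ((t l * star (t l) : A) : Unitization ℂ A))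
    (by rw [IsIdempotentElem, ← Unitization.inr_mul, (ht.isStarProjection v).isIdempotentElem.eq])
    F (fun l _ => Unitization.inr_sub ℂ _ _)
    (fun l hl => by rw [← Unitization.inr_mul, hle l hl])
    (fun l hl => by rw [← Unitization.inr_mul, hre l hl])
    (fun l hl l' hl' hne => by
      dsimp only
      rw [← Unitization.inr_mul, horth hl hl' hne, Unitization.inr_zero]),
    ← hsum, ← Unitization.inr_sub, Unitization.snd_inr, ht.mul_star_self_of_isVertex hv]

lemma IsTCK.mul_star_ne_zero [CStarRing A] (ht : G.IsTCK σ t) {l : G.Path}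
    (h : t (G.s l) ≠ 0) : t l * star (t l) ≠ 0 := by
  rw [CStarRing.mul_star_self_ne_zero_iff]
  rintro hl
  rw [← ht.2.2.2.1 l, hl, mul_zero] at h
  exact h rfl

lemma IsTCK.mul_star_mul_star_mul_star (ht : G.IsTCK σ t) {a b : G.Path} (h : G.s a = G.s b) :
    t a * star (t b) * star (t a * star (t b)) = t a * star (t a) := by
  rw [star_mul, star_star, mul_assoc, ← mul_assoc (star (t b)), ht.2.2.2.1 b, ← h, ← mul_assoc,
    ht.mul_source]

lemma IsCK.sum_mul_star_ext_singleton [IsScalarTower ℂ A A] [SMulCommClass ℂ A A]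
    (ht : G.IsCK σ t) (hFA : G.FinitelyAligned) {μ ν : G.Path}
    (hgc : ∀ τ' : G.Path, G.r τ' = G.s μ → (G.MCE (G.comp μ τ') ν).Nonempty)
    (hμν : ¬ ∃ β, G.s ν = G.r β ∧ G.comp ν β = μ) :
    ∑ α ∈ (G.ext_singleton_finite hFA μ ν).toFinset, t α * star (t α) = t (G.s μ) := by
  have hr : ∀ α ∈ (G.ext_singleton_finite hFA μ ν).toFinset, G.r α = G.s μ := fun α hα =>
    (G.mem_ext_singleton.mp ((Set.Finite.mem_toFinset _).mp hα)).1.symm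
  have hΔ := ht.2 _ (G.s μ) (by simpa using G.isFE_ext_singleton hFA hgc hμν) (G.d_s μ) hr
  rw [ht.1.delta_eq_sub_sum (G.d_s μ) hr] at hΔ
  · exact (sub_eq_zero.mp hΔ).symm
  · intro α hα α' hα' hne
    simp only [Set.Finite.coe_toFinset] at hα hα'
    exact ht.1.mul_star_mul_mul_star_eq_zero
      (G.mce_eq_empty_of_d_eq (G.d_eq_of_mem_ext_singleton hα hα') hne)

lemma IsCK.mul_star_mul_mul_star_of_mce_comp_nonempty [IsScalarTower ℂ A A]
    [SMulCommClass ℂ A A] [StarModule ℂ A] (ht : G.IsCK σ t) (hFA : G.FinitelyAligned)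
    {μ ν : G.Path} (hgc : ∀ τ' : G.Path, G.r τ' = G.s μ → (G.MCE (G.comp μ τ') ν).Nonempty) :
    t ν * star (t ν) * (t μ * star (t μ)) = t μ * star (t μ) := by
  classical
  by_cases hμν : ∃ β, G.s ν = G.r β ∧ G.comp ν β = μ
  · obtain ⟨β, hβ, rfl⟩ := hμν
    exact ht.1.mul_star_mul_mul_star_comp hβ
  set F := (G.ext_singleton_finite hFA μ ν).toFinset
  have hF : ((F.image (G.comp μ) : Finset G.Path) : Set G.Path) = G.MCE ν μ := by
    rw [Finset.coe_image, Set.Finite.coe_toFinset, image_comp_ext_singleton, mce_comm]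
  calc t ν * star (t ν) * (t μ * star (t μ))
      = ∑ x ∈ F.image (G.comp μ), t x * star (t x) := ht.1.2.2.2.2 ν μ _ hF
    _ = ∑ α ∈ F, t μ * (t α * star (t α)) * star (t μ) := by
        rw [Finset.sum_image (by simpa [F] using G.injOn_comp_ext_singleton μ ν)]
        refine Finset.sum_congr rfl fun α hα => ht.1.mul_star_comp ?_
        exact (G.mem_ext_singleton.mp ((Set.Finite.mem_toFinset _).mp hα)).1
    _ = t μ * star (t μ) := by
        rw [← Finset.sum_mul, ← Finset.mul_sum, ht.sum_mul_star_ext_singleton hFA hgc hμν,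
          ht.1.mul_source]

end TCK

end KGraph

theorem stmt7_general {k : ℕ} (G : KGraph k) (hFA : G.FinitelyAligned) (σ : G.Cocycle)
    {A : Type*} [NonUnitalNormedRing A] [StarRing A] [CStarRing A]
    [NormedSpace ℂ A] [IsScalarTower ℂ A A] [SMulCommClass ℂ A A]
    [StarModule ℂ A] [PartialOrder A] [StarOrderedRing A]
    (t : G.Path → A) (ht : G.IsCK σ t)
    (μ ν τ : G.Path)
    (hs : G.s μ = G.s ν)
    (hgc : ∀ τ' : G.Path, G.r τ' = G.s μ → (G.MCE (G.comp μ τ') ν).Nonempty)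
    (hτ : G.r τ = G.s ν) (hent : G.MCE μ (G.comp ν τ) = ∅)
    (hnz : t (G.s τ) ≠ 0) :
    ∀ V : A, V = t μ * star (t ν) →
      V * star V = t μ * star (t μ) ∧
      star V * V = t ν * star (t ν) ∧
      t (G.comp ν τ) * star (t (G.comp ν τ)) ≠ 0 ∧
      t (G.comp ν τ) * star (t (G.comp ν τ)) ≤ t ν * star (t ν) ∧
      t μ * star (t μ) ≤ t ν * star (t ν) - t (G.comp ν τ) * star (t (G.comp ν τ)) ∧
      ∀ W : A, W = V * (t μ * star (t μ)) →
        star W * W = t μ * star (t μ) ∧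
        W * star W ≤ t μ * star (t μ) ∧
        W * star W ≠ t μ * star (t μ) := by
  rintro V rfl
  have htck := ht.1
  have hVV := htck.mul_star_mul_star_mul_star hs
  have hVV' : star (t μ * star (t ν)) * (t μ * star (t ν)) = t ν * star (t ν) := by
    simpa only [star_mul, star_star] using htck.mul_star_mul_star_mul_star hs.symm
  have hντ_ne := htck.mul_star_ne_zero (l := G.comp ν τ) (by rwa [G.s_comp ν τ hτ.symm])
  have hν_ντ := htck.mul_star_mul_mul_star_comp hτ.symm
  have hντ_μ := htck.mul_star_mul_mul_star_eq_zero (a := G.comp ν τ) (b := μ)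
    (by rw [G.mce_comm, hent])
  have hνμ := ht.mul_star_mul_mul_star_of_mce_comp_nonempty hFA hgc
  have hν_sub_ντ := (htck.isStarProjection _).sub_of_mul_eq_right (htck.isStarProjection ν) hν_ντ
  have hμ_le : t μ * star (t μ) ≤ t ν * star (t ν) - t (G.comp ν τ) * star (t (G.comp ν τ)) :=
    (htck.isStarProjection μ).le_of_mul_eq_right hν_sub_ντ (by rw [sub_mul, hνμ, hντ_μ, sub_zero])
  refine ⟨hVV, hVV', hντ_ne,
    (htck.isStarProjection _).le_of_mul_eq_right (htck.isStarProjection ν) hν_ντ, hμ_le, ?_⟩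
  rintro W rfl
  exact (htck.isStarProjection μ).infinite_of_le_sub_of_partialIsometry
    (htck.isStarProjection _) hVV hVV' hνμ hν_ντ hμ_le hντ_ne

/-- a generalised cycle with an entrance gives an infinite projection. -/
theorem stmt7 {k : ℕ} (G : KGraph k) (hFA : G.FinitelyAligned) (σ : G.Cocycle)
    {A : Type*} [NonUnitalNormedRing A] [StarRing A] [CStarRing A]
    [NormedSpace ℂ A] [IsScalarTower ℂ A A] [SMulCommClass ℂ A A]
    [StarModule ℂ A] [CompleteSpace A] [PartialOrder A] [StarOrderedRing A]
    (t : G.Path → A) (ht : G.IsCK σ t)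
    (μ ν τ : G.Path)
    (hr : G.r μ = G.r ν) (hs : G.s μ = G.s ν)
    (hgc : ∀ τ' : G.Path, G.r τ' = G.s μ → (G.MCE (G.comp μ τ') ν).Nonempty)
    (hτ : G.r τ = G.s ν) (hent : G.MCE μ (G.comp ν τ) = ∅)
    (hnz : t (G.s τ) ≠ 0) :
    ∀ V : A, V = t μ * star (t ν) →
      V * star V = t μ * star (t μ) ∧
      star V * V = t ν * star (t ν) ∧
      t (G.comp ν τ) * star (t (G.comp ν τ)) ≠ 0 ∧
      t (G.comp ν τ) * star (t (G.comp ν τ)) ≤ t ν * star (t ν) ∧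
      t μ * star (t μ) ≤ t ν * star (t ν) - t (G.comp ν τ) * star (t (G.comp ν τ)) ∧
      ∀ W : A, W = V * (t μ * star (t μ)) →
        star W * W = t μ * star (t μ) ∧
        W * star W ≤ t μ * star (t μ) ∧
        W * star W ≠ t μ * star (t μ) :=
  stmt7_general G hFA σ t ht μ ν τ hs hgc hτ hent hnz
end

section
/- Let Λ be a finitely aligned k-graph, let c be a T-valued 2-cocycle on Λ, let Ε ⊆ FE(Λ) be satiated, let t be a relative Cuntz–Krieger (Λ,c;Ε)-family in a C*-algebra, and let I be a closed two-sided ideal of C*(t). Then H_I := {v ∈ Λ^0 : t_v ∈ I} is hereditary and Ε-saturated. -/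
open scoped BigOperators

/-!
Hereditary: `t_{s(λ)} = t_λ* t_{r(λ)} t_λ` lies in `I` whenever `t_{r(λ)}` does.
Saturated: for `μ ∈ E` with `t_{s(μ)} ∈ I`, also `q_μ = t_μ t_{s(μ)} t_μ*` lies in `I`. Since
every factor of `Δ(t)^E = t_v ∏_{μ ∈ E} (t_v - q_μ)` is congruent to the idempotent `t_v`
modulo `I`, the relation `Δ(t)^E = 0` gives `t_v ∈ I`.
-/

/-- `p ∏ₐ (p - q a) ≡ p` modulo `I`: each factor is congruent to the idempotent `p`. -/
theorem exists_mem_inr_mul_noncommProd_sub_eq {R A ι S : Type*} [CommRing R] [NonUnitalRing A]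
    [Module R A] [IsScalarTower R A A] [SMulCommClass R A A] [SetLike S A]
    [AddSubmonoidClass S A] (I : S) {p : A} (hp : p * p = p) (q : ι → A) (F : Finset ι)
    (hqI : ∀ a ∈ F, q a ∈ I) (hpq : ∀ a ∈ F, p * q a = q a) (hqp : ∀ a ∈ F, q a * p = q a)
    (hI : ∀ a ∈ F, ∀ y ∈ I, (p - q a) * y ∈ I)
    (h : (F : Set ι).Pairwise (Function.onFun Commute fun a => ((p - q a : A) : Unitization R A))) :
    ∃ y ∈ I, (p : Unitization R A) * F.noncommProd (fun a => ((p - q a : A) : Unitization R A)) h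
      = ((p - y : A) : Unitization R A) := by
  induction F using Finset.cons_induction with
  | empty => exact ⟨0, zero_mem I, by rw [Finset.noncommProd_empty, mul_one, sub_zero]⟩
  | cons a F ha ih =>
    have haF : a ∈ Finset.cons a F ha := Finset.mem_cons_self a F
    obtain ⟨y, hyI, hy⟩ := ih (fun b hb => hqI b (Finset.mem_cons_of_mem hb))
      (fun b hb => hpq b (Finset.mem_cons_of_mem hb))
      (fun b hb => hqp b (Finset.mem_cons_of_mem hb))
      (fun b hb => hI b (Finset.mem_cons_of_mem hb))
      (h.mono (by simp only [Finset.coe_cons, Set.subset_insert]))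
    have hleft : p * (p - q a) = p - q a := by rw [mul_sub, hp, hpq a haF]
    have hright : (p - q a) * p = p - q a := by rw [sub_mul, hp, hqp a haF]
    have hcomm : (p : Unitization R A) * ((p - q a : A) : Unitization R A)
        = ((p - q a : A) : Unitization R A) * p := by
      rw [← Unitization.inr_mul, ← Unitization.inr_mul, hleft, hright]
    refine ⟨q a + (p - q a) * y, add_mem (hqI a haF) (hI a haF y hyI), ?_⟩
    rw [Finset.noncommProd_cons, ← mul_assoc, hcomm, mul_assoc, hy, ← Unitization.inr_mul,
      mul_sub, hright, sub_sub]

namespace KGraph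

variable {k : ℕ} {G : KGraph k}

theorem MCE_comm (μ ν : G.Path) : G.MCE μ ν = G.MCE ν μ := by
  ext l
  constructor <;> rintro ⟨hd, hμ, hν⟩ <;> exact ⟨by rw [hd, sup_comm], hν, hμ⟩

section CStar

variable {A : Type*} [NonUnitalNormedRing A] [StarRing A] [NormedSpace ℂ A]

theorem mem_cstarOf_of_mem_adjoin [IsScalarTower ℂ A A] [SMulCommClass ℂ A A] [StarModule ℂ A]
    {t : G.Path → A} {x : A}
    (hx : x ∈ NonUnitalStarAlgebra.adjoin ℂ (Set.range t)) : x ∈ G.cstarOf t :=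
  subset_closure hx

theorem apply_mem_adjoin [IsScalarTower ℂ A A] [SMulCommClass ℂ A A] [StarModule ℂ A]
    (t : G.Path → A) (l : G.Path) :
    t l ∈ NonUnitalStarAlgebra.adjoin ℂ (Set.range t) :=
  NonUnitalStarAlgebra.subset_adjoin ℂ _ (Set.mem_range_self l)

namespace IsTCK

variable {σ : G.Cocycle} {t : G.Path → A}

theorem star_vertex (ht : G.IsTCK σ t) {v : G.Path} (hv : G.IsVertex v) : star (t v) = t v :=
  (ht.1 v hv).1

theorem vertex_mul_self (ht : G.IsTCK σ t) {v : G.Path} (hv : G.IsVertex v) : t v * t v = t v :=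
  (ht.1 v hv).2

theorem vertex_mul_star_self (ht : G.IsTCK σ t) {v : G.Path} (hv : G.IsVertex v) :
    t v * star (t v) = t v := by
  rw [ht.star_vertex hv, ht.vertex_mul_self hv]

theorem r_mul (ht : G.IsTCK σ t) (l : G.Path) : t (G.r l) * t l = t l := by
  have h := ht.2.2.1 (G.r l) l (G.s_of_vertex _ (G.d_r l))
  rwa [σ.left_id, G.id_comp, one_smul] at h

theorem mul_s (ht : G.IsTCK σ t) (l : G.Path) : t l * t (G.s l) = t l := by
  have h := ht.2.2.1 l (G.s l) (G.r_of_vertex _ (G.d_s l)).symm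
  rwa [σ.right_id, G.comp_id, one_smul] at h

theorem star_mul_r (ht : G.IsTCK σ t) (l : G.Path) : star (t l) * t (G.r l) = star (t l) := by
  rw [← ht.star_vertex (G.d_r l), ← star_mul, ht.r_mul]

theorem r_mul_rangeProj (ht : G.IsTCK σ t) (l : G.Path) :
    t (G.r l) * (t l * star (t l)) = t l * star (t l) := by
  rw [← mul_assoc, ht.r_mul]

theorem rangeProj_mul_r (ht : G.IsTCK σ t) (l : G.Path) :
    t l * star (t l) * t (G.r l) = t l * star (t l) := by
  rw [mul_assoc, ht.star_mul_r]

/-- Range projections commute because, by (TCK4), both products equal the same sum over the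
finite set `MCE(μ, ν) = MCE(ν, μ)`. -/
theorem commute_rangeProj (ht : G.IsTCK σ t) (hFA : G.FinitelyAligned) (μ ν : G.Path) :
    Commute (t μ * star (t μ)) (t ν * star (t ν)) := by
  have hμν := ht.2.2.2.2 μ ν (hFA μ ν).toFinset (Set.Finite.coe_toFinset _)
  have hνμ := ht.2.2.2.2 ν μ (hFA μ ν).toFinset (by rw [Set.Finite.coe_toFinset, MCE_comm])
  exact hμν.trans hνμ.symm

theorem pairwise_commute_delta_factors [IsScalarTower ℂ A A] [SMulCommClass ℂ A A]
    (ht : G.IsTCK σ t) (hFA : G.FinitelyAligned) {v : G.Path}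
    (hv : G.IsVertex v) (F : Finset G.Path) (hrF : ∀ μ ∈ F, G.r μ = v) :
    (F : Set G.Path).Pairwise (Function.onFun Commute fun l =>
      ((t v * star (t v) - t l * star (t l) : A) : Unitization ℂ A)) := by
  intro μ hμ ν hν _
  have hvq : ∀ l ∈ F, Commute (t v) (t l * star (t l)) := fun l hl => by
    rw [Commute, SemiconjBy, ← hrF l hl, ht.r_mul_rangeProj, ht.rangeProj_mul_r]
  have h : Commute (t v - t μ * star (t μ)) (t v - t ν * star (t ν)) :=
    ((Commute.refl _).sub_right (hvq ν hν)).sub_left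
      ((hvq μ hμ).symm.sub_right (ht.commute_rangeProj hFA μ ν))
  rw [ht.vertex_mul_star_self hv]
  exact (h.map (Unitization.inrNonUnitalAlgHom ℂ A) :)

theorem s_mem_of_r_mem [IsScalarTower ℂ A A] [SMulCommClass ℂ A A] [StarModule ℂ A]
    (ht : G.IsTCK σ t) {I : Submodule ℂ A}
    (hIabs : ∀ x ∈ G.cstarOf t, ∀ y ∈ I, x * y ∈ I ∧ y * x ∈ I)
    {l : G.Path} (hl : t (G.r l) ∈ I) : t (G.s l) ∈ I := by
  have h := (hIabs _ (mem_cstarOf_of_mem_adjoin (star_mem (apply_mem_adjoin t l))) _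
    (hIabs _ (mem_cstarOf_of_mem_adjoin (apply_mem_adjoin t l)) _ hl).2).1
  rwa [ht.r_mul, ht.2.2.2.1] at h

theorem rangeProj_mem_of_s_mem [IsScalarTower ℂ A A] [SMulCommClass ℂ A A] [StarModule ℂ A]
    (ht : G.IsTCK σ t) {I : Submodule ℂ A}
    (hIabs : ∀ x ∈ G.cstarOf t, ∀ y ∈ I, x * y ∈ I ∧ y * x ∈ I)
    {l : G.Path} (hl : t (G.s l) ∈ I) : t l * star (t l) ∈ I := by
  have h := (hIabs _ (mem_cstarOf_of_mem_adjoin (star_mem (apply_mem_adjoin t l))) _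
    (hIabs _ (mem_cstarOf_of_mem_adjoin (apply_mem_adjoin t l)) _ hl).1).2
  rwa [ht.mul_s] at h

end IsTCK

theorem IsRelCK.vertex_mem_of_forall_s_mem [IsScalarTower ℂ A A] [SMulCommClass ℂ A A]
    [StarModule ℂ A] {σ : G.Cocycle} {Ε : Set (Set G.Path)}
    {t : G.Path → A} (ht : G.IsRelCK σ Ε t) (hFA : G.FinitelyAligned) {I : Submodule ℂ A}
    (hIabs : ∀ x ∈ G.cstarOf t, ∀ y ∈ I, x * y ∈ I ∧ y * x ∈ I) {E : Set G.Path} (hE : E ∈ Ε)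
    (hEfin : E.Finite) {v : G.Path} (hv : G.IsVertex v) (hrE : ∀ μ ∈ E, G.r μ = v)
    (hsE : ∀ μ ∈ E, t (G.s μ) ∈ I) : t v ∈ I := by
  have htck := ht.1
  set F := hEfin.toFinset
  have hrF : ∀ μ ∈ F, G.r μ = v := fun μ hμ => hrE μ (hEfin.mem_toFinset.1 hμ)
  have hcomm := htck.pairwise_commute_delta_factors hFA hv F hrF
  have hdelta := ht.2 F v (by rwa [hEfin.coe_toFinset]) hv hrF
  rw [Delta, dif_pos hcomm] at hdelta
  have hfactor : ∀ a ∈ F, ∀ y ∈ I, (t v * star (t v) - t a * star (t a)) * y ∈ I :=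
    fun a _ y hy => (hIabs _ (mem_cstarOf_of_mem_adjoin (sub_mem
      (mul_mem (apply_mem_adjoin t v) (star_mem (apply_mem_adjoin t v)))
      (mul_mem (apply_mem_adjoin t a) (star_mem (apply_mem_adjoin t a))))) y hy).1
  obtain ⟨y, hyI, hy⟩ := exists_mem_inr_mul_noncommProd_sub_eq I
    (by rw [htck.vertex_mul_star_self hv, htck.vertex_mul_self hv]) _ F
    (fun μ hμ => htck.rangeProj_mem_of_s_mem hIabs (hsE μ (hEfin.mem_toFinset.1 hμ)))
    (fun μ hμ => by rw [htck.vertex_mul_star_self hv, ← hrF μ hμ, htck.r_mul_rangeProj])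
    (fun μ hμ => by rw [htck.vertex_mul_star_self hv, ← hrF μ hμ, htck.rangeProj_mul_r])
    hfactor hcomm
  rw [hy, Unitization.snd_inr, htck.vertex_mul_star_self hv, sub_eq_zero] at hdelta
  exact hdelta ▸ hyI

end CStar

end KGraph

theorem stmt9_general {k : ℕ} (G : KGraph k) (hFA : G.FinitelyAligned) (σ : G.Cocycle)
    {A : Type*} [NonUnitalNormedRing A] [StarRing A]
    [NormedSpace ℂ A] [IsScalarTower ℂ A A] [SMulCommClass ℂ A A]
    [StarModule ℂ A]
    (Ε : Set (Set G.Path)) (hΕ : G.Satiated Ε)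
    (t : G.Path → A) (ht : G.IsRelCK σ Ε t)
    (I : Submodule ℂ A)
    (hIabs : ∀ x ∈ G.cstarOf t, ∀ y ∈ I, x * y ∈ I ∧ y * x ∈ I) :
    ∀ HI : Set G.Path, HI = {w | G.IsVertex w ∧ t w ∈ I} →
      (∀ l : G.Path, G.r l ∈ HI → G.s l ∈ HI) ∧
      (∀ E ∈ Ε, ∀ v : G.Path, G.IsVertex v → (∀ μ ∈ E, G.r μ = v) →
        (∀ μ ∈ E, G.s μ ∈ HI) → v ∈ HI) := by
  rintro HI rfl
  refine ⟨fun l ⟨_, hl⟩ => ⟨G.d_s l, ht.1.s_mem_of_r_mem hIabs hl⟩, ?_⟩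
  intro E hE v hv hrE hsE
  exact ⟨hv, ht.vertex_mem_of_forall_s_mem hFA hIabs hE (hΕ.1 E hE).1 hv hrE
    fun μ hμ => (hsE μ hμ).2⟩

/-- `H_I = {v ∈ Λ⁰ : t_v ∈ I}` is hereditary and `Ε`-saturated. -/
theorem stmt9 {k : ℕ} (G : KGraph k) (hFA : G.FinitelyAligned) (σ : G.Cocycle)
    {A : Type*} [NonUnitalNormedRing A] [StarRing A] [CStarRing A]
    [NormedSpace ℂ A] [IsScalarTower ℂ A A] [SMulCommClass ℂ A A]
    [StarModule ℂ A] [CompleteSpace A]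
    (Ε : Set (Set G.Path)) (hΕ : G.Satiated Ε)
    (t : G.Path → A) (ht : G.IsRelCK σ Ε t)
    (I : Submodule ℂ A) (hIclosed : IsClosed (I : Set A))
    (hIsub : (I : Set A) ⊆ G.cstarOf t)
    (hIabs : ∀ x ∈ G.cstarOf t, ∀ y ∈ I, x * y ∈ I ∧ y * x ∈ I) :
    ∀ HI : Set G.Path, HI = {w | G.IsVertex w ∧ t w ∈ I} →
      (∀ l : G.Path, G.r l ∈ HI → G.s l ∈ HI) ∧
      (∀ E ∈ Ε, ∀ v : G.Path, G.IsVertex v → (∀ μ ∈ E, G.r μ = v) →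
        (∀ μ ∈ E, G.s μ ∈ HI) → v ∈ HI) :=
  stmt9_general G hFA σ Ε hΕ t ht I hIabs
end
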